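/- Assume the empirical setting, let λ ≥ 0, let T > 0, and let Y be a rescaled generation flow. Suppose Y_τ → x* as τ → ∞, where x* is a local minimizer of Φ_λ having a unique nearest point in A₁ and a unique nearest point in A₂. Then there exists C > 0 such that ‖Y_τ − x*‖ ≤ C·e^{−τ/2} for all τ ≥ 0. -/

import Mathlib

open MeasureTheory Metric Filter Topology

/-- The heat kernel `G_t(z) = (4πt)^{-d/2} exp(-‖z‖²/(4t))` on `EuclideanSpace ℝ (Fin d)`. -/
noncomputable def heatKernel (d : ℕ) (t : ℝ) (z : EuclideanSpace ℝ (Fin d)) : ℝ :=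
  (4 * Real.pi * t) ^ (-(d : ℝ) / 2) * Real.exp (-‖z‖ ^ 2 / (4 * t))

/-- The heat evolution `u(x,t) = ∫ G_t(x - y) dμ(y)` of a measure `μ`. -/
noncomputable def heatEvolution {d : ℕ} (μ : Measure (EuclideanSpace ℝ (Fin d)))
    (x : EuclideanSpace ℝ (Fin d)) (t : ℝ) : ℝ :=
  ∫ y, heatKernel d t (x - y) ∂μ

/-- The rescaled mixed potential `F_λ(x,t) = -4t (λ log u₁(x,t) + (1-λ) log u₂(x,t))`. -/
noncomputable def mixedPotential {d : ℕ} (μ₁ μ₂ : Measure (EuclideanSpace ℝ (Fin d))) (lam : ℝ)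
    (x : EuclideanSpace ℝ (Fin d)) (t : ℝ) : ℝ :=
  -4 * t * (lam * Real.log (heatEvolution μ₁ x t) +
    (1 - lam) * Real.log (heatEvolution μ₂ x t))

/-- The set `Π_A(x)` of nearest points of `x` in `A`. -/
def nearestPts {d : ℕ} (A : Set (EuclideanSpace ℝ (Fin d)))
    (x : EuclideanSpace ℝ (Fin d)) : Set (EuclideanSpace ℝ (Fin d)) :=
  {a ∈ A | ‖x - a‖ = Metric.infDist x A}

/-- The geometric distance potential `Φ_λ(x) = λ d_{A₁}(x)² + (1-λ) d_{A₂}(x)²`. -/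
noncomputable def distPotential {d : ℕ} (A₁ A₂ : Set (EuclideanSpace ℝ (Fin d))) (lam : ℝ)
    (x : EuclideanSpace ℝ (Fin d)) : ℝ :=
  lam * (Metric.infDist x A₁) ^ 2 + (1 - lam) * (Metric.infDist x A₂) ^ 2

/- ============ Auxiliary material ============ -/

section Aux

open InnerProductSpace

variable {d : ℕ}
local notation "E" => EuclideanSpace ℝ (Fin d)

lemma gradH_const_mul {f : E → ℝ} {v x : E} (hf : HasGradientAt f v x) (c : ℝ) :
    HasGradientAt (fun y => c * f y) (c • v) x := by
  have := hf.hasFDerivAt.const_mul c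
  rwa [← map_smul (toDual ℝ E), hasFDerivAt_iff_hasGradientAt,
    LinearIsometryEquiv.symm_apply_apply] at this

lemma gradH_add {f g : E → ℝ} {v u x : E} (hf : HasGradientAt f v x) (hg : HasGradientAt g u x) :
    HasGradientAt (fun y => f y + g y) (v + u) x := by
  have := hf.hasFDerivAt.add hg.hasFDerivAt
  rwa [← map_add (toDual ℝ E), hasFDerivAt_iff_hasGradientAt,
    LinearIsometryEquiv.symm_apply_apply] at this

lemma gradH_log {f : E → ℝ} {v x : E} (hf : HasGradientAt f v x) (hx : f x ≠ 0) :
    HasGradientAt (fun y => Real.log (f y)) ((f x)⁻¹ • v) x := by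
  have := hf.hasFDerivAt.log hx
  rwa [← map_smul (toDual ℝ E), hasFDerivAt_iff_hasGradientAt,
    LinearIsometryEquiv.symm_apply_apply] at this

lemma gradH_exp {f : E → ℝ} {v x : E} (hf : HasGradientAt f v x) :
    HasGradientAt (fun y => Real.exp (f y)) (Real.exp (f x) • v) x := by
  have := hf.hasFDerivAt.exp
  rwa [← map_smul (toDual ℝ E), hasFDerivAt_iff_hasGradientAt,
    LinearIsometryEquiv.symm_apply_apply] at this

lemma gradH_sum {ι : Type*} (s : Finset ι) {f : ι → E → ℝ} {v : ι → E} {x : E}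
    (hf : ∀ i ∈ s, HasGradientAt (f i) (v i) x) :
    HasGradientAt (fun y => ∑ i ∈ s, f i y) (∑ i ∈ s, v i) x := by
  have := HasFDerivAt.fun_sum (fun i hi => (hf i hi).hasFDerivAt)
  rwa [← map_sum (toDual ℝ E), hasFDerivAt_iff_hasGradientAt,
    LinearIsometryEquiv.symm_apply_apply] at this

lemma gradH_normsq_sub (p : E) (x : E) :
    HasGradientAt (fun y => ‖y - p‖ ^ 2) ((2:ℝ) • (x - p)) x := by
  have h := ((hasFDerivAt_id x).sub_const p).norm_sq
  rw [hasFDerivAt_iff_hasGradientAt] at h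
  convert h using 1
  · rfl
  apply (toDual ℝ E).injective
  rw [LinearIsometryEquiv.apply_symm_apply]
  ext y
  simp [toDual_apply_apply, real_inner_smul_left, two_smul, inner_add_left]

/-- The softmax mean of the points `p` with weights `w` at temperature `t`, seen from `x`. -/
noncomputable def smean {d n : ℕ} (w : Fin n → ℝ) (p : Fin n → EuclideanSpace ℝ (Fin d))
    (t : ℝ) (x : EuclideanSpace ℝ (Fin d)) : EuclideanSpace ℝ (Fin d) :=
  (∑ k, w k * Real.exp (-‖x - p k‖ ^ 2 / (4 * t)))⁻¹ •
    ∑ k, (w k * Real.exp (-‖x - p k‖ ^ 2 / (4 * t))) • p k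

lemma Ssum_pos {n : ℕ} (hn : 0 < n) {w : Fin n → ℝ} (hw : ∀ k, 0 < w k)
    (g : Fin n → ℝ) : 0 < ∑ k, w k * Real.exp (g k) := by
  haveI : Nonempty (Fin n) := Fin.pos_iff_nonempty.mp hn
  exact Finset.sum_pos (fun k _ => mul_pos (hw k) (Real.exp_pos _)) Finset.univ_nonempty

lemma hasGradientAt_family {n : ℕ} (hn : 0 < n) {w : Fin n → ℝ} (hw : ∀ k, 0 < w k)
    (p : Fin n → E) {t : ℝ} (ht : 0 < t) {c₀ : ℝ} (hc₀ : 0 < c₀) (x : E) :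
    HasGradientAt
      (fun y => -(4*t) * Real.log (c₀ * ∑ k, w k * Real.exp (-‖y - p k‖ ^ 2 / (4 * t))))
      ((2:ℝ) • (x - smean w p t x)) x := by
  have harg : ∀ (q : E), (fun y : E => -‖y - q‖ ^ 2 / (4 * t)) =
      (fun y : E => (-(4*t)⁻¹) * ‖y - q‖ ^ 2) := by
    intro q; funext y; ring
  have hk3 : ∀ k : Fin n, HasGradientAt
      (fun y => w k * Real.exp (-‖y - p k‖ ^ 2 / (4 * t)))
      (w k • (Real.exp (-‖x - p k‖ ^ 2 / (4 * t)) • ((-(4*t)⁻¹) • ((2:ℝ) • (x - p k))))) x := by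
    intro k
    have h0 := gradH_normsq_sub (p k) x
    have h1 := gradH_const_mul h0 (-(4*t)⁻¹)
    rw [← harg (p k)] at h1
    exact gradH_const_mul (gradH_exp h1) (w k)
  have hS := gradH_sum Finset.univ (fun k _ => hk3 k)
  have hSpos : 0 < ∑ k, w k * Real.exp (-‖x - p k‖ ^ 2 / (4 * t)) := Ssum_pos hn hw _
  have hc₀S := gradH_const_mul hS c₀
  have hlog := gradH_log hc₀S (by positivity)
  have hfinal := gradH_const_mul hlog (-(4*t))
  convert hfinal using 1
  have hsum : (∑ k, w k • (Real.exp (-‖x - p k‖ ^ 2 / (4 * t)) •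
        ((-(4*t)⁻¹) • ((2:ℝ) • (x - p k)))))
      = ((-(4*t)⁻¹) * 2) •
        ((∑ k, w k * Real.exp (-‖x - p k‖ ^ 2 / (4 * t))) • x -
          ∑ k, (w k * Real.exp (-‖x - p k‖ ^ 2 / (4 * t))) • p k) := by
    rw [Finset.sum_smul, ← Finset.sum_sub_distrib, Finset.smul_sum]
    refine Finset.sum_congr rfl fun k _ => ?_
    rw [← smul_sub]
    simp only [smul_smul]
    congr 1
    ring
  rw [hsum, smean]
  have hne : (∑ k, w k * Real.exp (-‖x - p k‖ ^ 2 / (4 * t))) ≠ 0 := ne_of_gt hSpos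
  match_scalars <;> field_simp <;> (simp only [neg_div] at hne; exact (div_self hne).symm)

lemma integral_dirac_mixture {d : ℕ} {n : ℕ} (w : Fin n → ℝ)
    (pts : Fin n → EuclideanSpace ℝ (Fin d)) (hw : ∀ k, 0 ≤ w k)
    (f : EuclideanSpace ℝ (Fin d) → ℝ) :
    ∫ y, f y ∂(∑ k, ENNReal.ofReal (w k) • Measure.dirac (pts k)) = ∑ k, w k * f (pts k) := by
  rw [integral_finset_sum_measure]
  · refine Finset.sum_congr rfl fun k _ => ?_
    rw [integral_smul_measure, integral_dirac, ENNReal.toReal_ofReal (hw k), smul_eq_mul]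
  · intro k _
    refine Integrable.smul_measure ?_ ENNReal.ofReal_ne_top
    refine (integrable_const (f (pts k))).congr ?_
    rw [Filter.EventuallyEq, MeasureTheory.ae_dirac_eq]
    exact Filter.eventually_pure.2 rfl

lemma heatEvolution_eq {n : ℕ} (w : Fin n → ℝ) (hw : ∀ k, 0 ≤ w k)
    (p : Fin n → E) (x : E) (t : ℝ) :
    heatEvolution (∑ k, ENNReal.ofReal (w k) • Measure.dirac (p k)) x t =
      (4 * Real.pi * t) ^ (-(d : ℝ) / 2) * ∑ k, w k * Real.exp (-‖x - p k‖ ^ 2 / (4 * t)) := by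
  rw [heatEvolution, integral_dirac_mixture w p hw _, Finset.mul_sum]
  exact Finset.sum_congr rfl fun k _ => by rw [heatKernel]; ring

lemma mixedPotential_grad {n₁ n₂ : ℕ} (hn₁ : 0 < n₁) (hn₂ : 0 < n₂)
    {w₁ : Fin n₁ → ℝ} {w₂ : Fin n₂ → ℝ} (hw₁ : ∀ k, 0 < w₁ k) (hw₂ : ∀ k, 0 < w₂ k)
    {xs : Fin n₁ → E} {ys : Fin n₂ → E}
    {μ₁ μ₂ : Measure (EuclideanSpace ℝ (Fin d))}
    (hμ₁ : μ₁ = ∑ k, ENNReal.ofReal (w₁ k) • Measure.dirac (xs k))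
    (hμ₂ : μ₂ = ∑ k, ENNReal.ofReal (w₂ k) • Measure.dirac (ys k))
    (lam : ℝ) {t : ℝ} (ht : 0 < t) (x : E) :
    HasGradientAt (fun y => mixedPotential μ₁ μ₂ lam y t)
      ((2:ℝ) • (x - (lam • smean w₁ xs t x + (1 - lam) • smean w₂ ys t x))) x := by
  have hc₀ : 0 < (4 * Real.pi * t) ^ (-(d : ℝ) / 2) :=
    Real.rpow_pos_of_pos (by positivity) _
  have h₁ := hasGradientAt_family hn₁ hw₁ xs ht hc₀ x
  have h₂ := hasGradientAt_family hn₂ hw₂ ys ht hc₀ x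
  have hadd := gradH_add (gradH_const_mul h₁ lam) (gradH_const_mul h₂ (1 - lam))
  have hfun : (fun y => mixedPotential μ₁ μ₂ lam y t) = fun y =>
      lam * (-(4*t) * Real.log ((4 * Real.pi * t) ^ (-(d : ℝ) / 2) *
        ∑ k, w₁ k * Real.exp (-‖y - xs k‖ ^ 2 / (4 * t)))) +
      (1 - lam) * (-(4*t) * Real.log ((4 * Real.pi * t) ^ (-(d : ℝ) / 2) *
        ∑ k, w₂ k * Real.exp (-‖y - ys k‖ ^ 2 / (4 * t)))) := by
    funext y
    rw [mixedPotential, hμ₁, hμ₂, heatEvolution_eq w₁ (fun k => (hw₁ k).le) xs y t,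
      heatEvolution_eq w₂ (fun k => (hw₂ k).le) ys y t]
    ring
  rw [hfun]
  convert hadd using 1
  module

lemma smean_err {n : ℕ} {w : Fin n → ℝ} (hw : ∀ k, 0 < w k) (p : Fin n → E)
    {t : ℝ} (ht : 0 < t) (x x₀ a : E) (k₀ : Fin n) (hk₀ : p k₀ = a)
    {Δ : ℝ} (hgap : ∀ k, p k ≠ a → ‖x₀ - a‖ ^ 2 + Δ ≤ ‖x₀ - p k‖ ^ 2)
    (hpert : ∀ k, |‖x - p k‖ ^ 2 - ‖x₀ - p k‖ ^ 2| ≤ Δ / 4) :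
    ‖smean w p t x - a‖ ≤
      ((∑ k, w k * ‖p k - a‖) / w k₀) * Real.exp (-(Δ / 2) / (4 * t)) := by
  have hn : 0 < n := k₀.pos
  set c : Fin n → ℝ := fun k => w k * Real.exp (-‖x - p k‖ ^ 2 / (4 * t)) with hc
  have hcpos : ∀ k, 0 < c k := fun k => mul_pos (hw k) (Real.exp_pos _)
  have hSpos : 0 < ∑ k, c k := Ssum_pos hn hw _
  have hEa : (0:ℝ) < Real.exp (-‖x - a‖ ^ 2 / (4 * t)) := Real.exp_pos _
  have hsmean : smean w p t x = (∑ k, c k)⁻¹ • ∑ k, c k • p k := by simp only [hc, smean]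
  have hpt : ∀ k, c k * ‖p k - a‖ ≤
      (w k * ‖p k - a‖) * (Real.exp (-‖x - a‖ ^ 2 / (4 * t)) * Real.exp (-(Δ / 2) / (4 * t))) := by
    intro k
    by_cases hpk : p k = a
    · simp [hpk]
    · have h1 := hgap k hpk
      have habs2 := abs_le.mp (hpert k)
      have habs3 := abs_le.mp (hpert k₀)
      rw [hk₀] at habs3
      have hexp : Real.exp (-‖x - p k‖ ^ 2 / (4 * t)) ≤
          Real.exp (-‖x - a‖ ^ 2 / (4 * t)) * Real.exp (-(Δ / 2) / (4 * t)) := by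
        rw [← Real.exp_add, Real.exp_le_exp, ← add_div]
        gcongr
        nlinarith
      calc c k * ‖p k - a‖ = (w k * ‖p k - a‖) * Real.exp (-‖x - p k‖ ^ 2 / (4 * t)) := by
            rw [hc]; ring
        _ ≤ _ := by
            apply mul_le_mul_of_nonneg_left hexp (mul_nonneg (hw k).le (norm_nonneg _))
  have hdiff : smean w p t x - a = (∑ k, c k)⁻¹ • ∑ k, c k • (p k - a) := by
    have expand : ∑ k, c k • (p k - a) = (∑ k, c k • p k) - (∑ k, c k) • a := by
      rw [Finset.sum_smul, ← Finset.sum_sub_distrib]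
      exact Finset.sum_congr rfl fun k _ => smul_sub _ _ _
    rw [hsmean, expand, smul_sub, smul_smul, inv_mul_cancel₀ (ne_of_gt hSpos), one_smul]
  have hnorm : ‖smean w p t x - a‖ ≤ (∑ k, c k)⁻¹ * ∑ k, c k * ‖p k - a‖ := by
    rw [hdiff, norm_smul, Real.norm_eq_abs, abs_of_pos (inv_pos.mpr hSpos)]
    apply mul_le_mul_of_nonneg_left _ (inv_pos.mpr hSpos).le
    refine (norm_sum_le _ _).trans (le_of_eq ?_)
    exact Finset.sum_congr rfl fun k _ => by
      rw [norm_smul, Real.norm_eq_abs, abs_of_pos (hcpos k)]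
  have hsum2 : ∑ k, c k * ‖p k - a‖ ≤
      (∑ k, w k * ‖p k - a‖) *
        (Real.exp (-‖x - a‖ ^ 2 / (4 * t)) * Real.exp (-(Δ / 2) / (4 * t))) := by
    rw [Finset.sum_mul]
    exact Finset.sum_le_sum fun k _ => hpt k
  have hSlow : w k₀ * Real.exp (-‖x - a‖ ^ 2 / (4 * t)) ≤ ∑ k, c k := by
    have h0 : w k₀ * Real.exp (-‖x - a‖ ^ 2 / (4 * t)) = c k₀ := by rw [hc]; simp [hk₀]
    rw [h0]
    exact Finset.single_le_sum (fun k _ => (hcpos k).le) (Finset.mem_univ k₀)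
  have hwk₀ : (0:ℝ) < w k₀ := hw k₀
  calc ‖smean w p t x - a‖ ≤ (∑ k, c k)⁻¹ * ∑ k, c k * ‖p k - a‖ := hnorm
    _ ≤ (w k₀ * Real.exp (-‖x - a‖ ^ 2 / (4 * t)))⁻¹ *
        ((∑ k, w k * ‖p k - a‖) *
          (Real.exp (-‖x - a‖ ^ 2 / (4 * t)) * Real.exp (-(Δ / 2) / (4 * t)))) := by
        refine mul_le_mul ?_ hsum2 ?_ (by positivity)
        · exact inv_anti₀ (by positivity) hSlow
        · exact Finset.sum_nonneg fun k _ => mul_nonneg (hcpos k).le (norm_nonneg _)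
    _ = ((∑ k, w k * ‖p k - a‖) / w k₀) * Real.exp (-(Δ / 2) / (4 * t)) := by
        have h1 : w k₀ ≠ 0 := hwk₀.ne'
        have h2 : Real.exp (-‖x - a‖ ^ 2 / (4 * t)) ≠ 0 := hEa.ne'
        field_simp

lemma gap_exists {n : ℕ} (p : Fin n → E) (x₀ a : E)
    (huniq : nearestPts (Set.range p) x₀ = {a}) :
    ∃ Δ > (0:ℝ), ∃ r > (0:ℝ), (∃ k₀, p k₀ = a) ∧
      (∀ k, p k ≠ a → ‖x₀ - a‖ ^ 2 + Δ ≤ ‖x₀ - p k‖ ^ 2) ∧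
      (∀ k (z : E), ‖z - x₀‖ ≤ r → |‖z - p k‖ ^ 2 - ‖x₀ - p k‖ ^ 2| ≤ Δ / 4) ∧
      (∀ z : E, ‖z - x₀‖ ≤ r → Metric.infDist z (Set.range p) = ‖z - a‖) := by
  classical
  have hmem : a ∈ nearestPts (Set.range p) x₀ := by rw [huniq]; rfl
  obtain ⟨ha, hdist⟩ := hmem
  obtain ⟨k₀, hk₀⟩ := ha
  have hstrict : ∀ k, p k ≠ a → ‖x₀ - a‖ < ‖x₀ - p k‖ := by
    intro k hk
    have hle : Metric.infDist x₀ (Set.range p) ≤ ‖x₀ - p k‖ := by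
      rw [← dist_eq_norm]
      exact Metric.infDist_le_dist_of_mem (Set.mem_range_self k)
    rcases lt_or_eq_of_le hle with h | h
    · rwa [← hdist] at h
    · exfalso
      apply hk
      have : p k ∈ nearestPts (Set.range p) x₀ := ⟨Set.mem_range_self k, h.symm⟩
      rw [huniq] at this
      exact this
  have hΔex : ∃ Δ > (0:ℝ), ∀ k, p k ≠ a → ‖x₀ - a‖ ^ 2 + Δ ≤ ‖x₀ - p k‖ ^ 2 := by
    set s := Finset.univ.filter (fun k => p k ≠ a) with hs
    rcases s.eq_empty_or_nonempty with he | hne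
    · refine ⟨1, one_pos, fun k hk => absurd ?_ (by simp [he] : k ∉ s)⟩
      simpa [hs] using hk
    · refine ⟨s.inf' hne (fun k => ‖x₀ - p k‖ ^ 2 - ‖x₀ - a‖ ^ 2), ?_, ?_⟩
      · rw [gt_iff_lt, Finset.lt_inf'_iff]
        intro k hk
        have hk' : p k ≠ a := by simpa [hs] using hk
        have := hstrict k hk'
        nlinarith [norm_nonneg (x₀ - a), norm_nonneg (x₀ - p k)]
      · intro k hk
        have hmem : k ∈ s := by simpa [hs] using hk
        have := Finset.inf'_le (fun k => ‖x₀ - p k‖ ^ 2 - ‖x₀ - a‖ ^ 2) hmem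
        linarith
  obtain ⟨Δ, hΔ, hgap⟩ := hΔex
  haveI : Nonempty (Fin n) := ⟨k₀⟩
  set R := Finset.univ.sup' Finset.univ_nonempty (fun k => ‖x₀ - p k‖) with hR
  have hRk : ∀ k, ‖x₀ - p k‖ ≤ R := by
    intro k
    rw [hR]
    exact Finset.le_sup' (fun k => ‖x₀ - p k‖) (Finset.mem_univ k)
  have hR0 : 0 ≤ R := le_trans (norm_nonneg _) (hRk k₀)
  set r := min 1 (Δ / (4 * (2 * R + 1))) with hr
  have hrpos : 0 < r := lt_min one_pos (by positivity)
  have hr1 : r ≤ 1 := min_le_left _ _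
  have hr2 : r * (2 * R + 1) ≤ Δ / 4 := by
    have : r ≤ Δ / (4 * (2 * R + 1)) := min_le_right _ _
    rw [le_div_iff₀ (by positivity)] at this
    nlinarith
  have hpert : ∀ k (z : E), ‖z - x₀‖ ≤ r → |‖z - p k‖ ^ 2 - ‖x₀ - p k‖ ^ 2| ≤ Δ / 4 := by
    intro k z hz
    have habs : |‖z - p k‖ - ‖x₀ - p k‖| ≤ ‖z - x₀‖ := by
      have := abs_norm_sub_norm_le (z - p k) (x₀ - p k)
      simpa [sub_sub_sub_cancel_right] using this
    have h1 : ‖z - p k‖ ≤ ‖x₀ - p k‖ + r := by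
      have := (abs_le.mp habs).2
      linarith
    have h2 : |‖z - p k‖ ^ 2 - ‖x₀ - p k‖ ^ 2| =
        |‖z - p k‖ - ‖x₀ - p k‖| * (‖z - p k‖ + ‖x₀ - p k‖) := by
      rw [show ‖z - p k‖ ^ 2 - ‖x₀ - p k‖ ^ 2 =
          (‖z - p k‖ - ‖x₀ - p k‖) * (‖z - p k‖ + ‖x₀ - p k‖) from by ring, abs_mul,
        abs_of_nonneg (by positivity : (0:ℝ) ≤ ‖z - p k‖ + ‖x₀ - p k‖)]
    rw [h2]
    have h3 : ‖z - p k‖ + ‖x₀ - p k‖ ≤ 2 * R + 1 := by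
      have := hRk k
      linarith
    calc |‖z - p k‖ - ‖x₀ - p k‖| * (‖z - p k‖ + ‖x₀ - p k‖)
        ≤ r * (2 * R + 1) := by
          apply mul_le_mul (le_trans habs hz) h3 (by positivity) hrpos.le
      _ ≤ Δ / 4 := hr2
  refine ⟨Δ, hΔ, r, hrpos, ⟨k₀, hk₀⟩, hgap, hpert, ?_⟩
  intro z hz
  apply le_antisymm
  · rw [← dist_eq_norm]
    exact Metric.infDist_le_dist_of_mem ⟨k₀, hk₀⟩
  · have hpoint : ∀ k : Fin n, ‖z - a‖ ≤ dist z (p k) := by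
      intro k
      rw [dist_eq_norm]
      by_cases hpk : p k = a
      · rw [hpk]
      · have h1 := hgap k hpk
        have h2 := abs_le.mp (hpert k z hz)
        have h3 := abs_le.mp (hpert k₀ z hz)
        rw [hk₀] at h3
        have hsq : ‖z - a‖ ^ 2 ≤ ‖z - p k‖ ^ 2 := by nlinarith
        exact (pow_le_pow_iff_left₀ (norm_nonneg _) (norm_nonneg _) two_ne_zero).mp hsq
    refine le_of_not_gt fun hlt => ?_
    obtain ⟨y, ⟨k, rfl⟩, hdy⟩ :=
      (Metric.infDist_lt_iff (⟨a, k₀, hk₀⟩ : (Set.range p).Nonempty)).mp hlt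
    exact absurd hdy (not_lt.mpr (hpoint k))

lemma exp_decay_bound {c : ℝ} (hc : 0 < c) (τ : ℝ) :
    Real.exp (τ/2) * Real.exp (-(c * Real.exp τ)) ≤
      Real.exp (-1 - Real.log c) * Real.exp (-τ/2) := by
  rw [← Real.exp_add, ← Real.exp_add, Real.exp_le_exp]
  have h := Real.log_le_sub_one_of_pos (mul_pos hc (Real.exp_pos τ))
  rw [Real.log_mul hc.ne' (Real.exp_pos τ).ne', Real.log_exp] at h
  linarith

end Aux

set_option maxHeartbeats 1000000 in
theorem exponential_rate_near_smooth_stable_minimizer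
    (d : ℕ) (hd : 1 ≤ d)
    (n₁ n₂ : ℕ)
    (xs : Fin n₁ → EuclideanSpace ℝ (Fin d)) (ys : Fin n₂ → EuclideanSpace ℝ (Fin d))
    (w₁ : Fin n₁ → ℝ) (w₂ : Fin n₂ → ℝ)
    (hw₁pos : ∀ k, 0 < w₁ k) (hw₂pos : ∀ ℓ, 0 < w₂ ℓ)
    (hw₁sum : ∑ k, w₁ k = 1) (hw₂sum : ∑ ℓ, w₂ ℓ = 1)
    (μ₁ μ₂ : Measure (EuclideanSpace ℝ (Fin d)))
    (hμ₁ : μ₁ = ∑ k, ENNReal.ofReal (w₁ k) • Measure.dirac (xs k))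
    (hμ₂ : μ₂ = ∑ ℓ, ENNReal.ofReal (w₂ ℓ) • Measure.dirac (ys ℓ))
    (A₁ A₂ : Set (EuclideanSpace ℝ (Fin d)))
    (hA₁ : A₁ = Set.range xs) (hA₂ : A₂ = Set.range ys)
    (lam : ℝ) (hlam : 0 ≤ lam)
    (T : ℝ) (hT : 0 < T)
    (xT : EuclideanSpace ℝ (Fin d))
    (Y : ℝ → EuclideanSpace ℝ (Fin d))
    (hY0 : Y 0 = xT)
    (hY : ∀ τ : ℝ, 0 ≤ τ →
      HasDerivAt Y
        (-(4 : ℝ)⁻¹ •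
          gradient (fun x => mixedPotential μ₁ μ₂ lam x (T * Real.exp (-τ))) (Y τ)) τ)
    (xstar : EuclideanSpace ℝ (Fin d))
    (hconv : Tendsto Y atTop (𝓝 xstar))
    (hmin : IsLocalMin (distPotential A₁ A₂ lam) xstar)
    (huniq₁ : ∃ a₁, nearestPts A₁ xstar = {a₁})
    (huniq₂ : ∃ a₂, nearestPts A₂ xstar = {a₂}) :
    ∃ C > (0 : ℝ), ∀ τ : ℝ, 0 ≤ τ → ‖Y τ - xstar‖ ≤ C * Real.exp (-τ / 2) := by
  classical
  have hn₁ : 0 < n₁ := by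
    rcases Nat.eq_zero_or_pos n₁ with h | h
    · subst h; simp at hw₁sum
    · exact h
  have hn₂ : 0 < n₂ := by
    rcases Nat.eq_zero_or_pos n₂ with h | h
    · subst h; simp at hw₂sum
    · exact h
  obtain ⟨a₁, huq₁⟩ := huniq₁
  obtain ⟨a₂, huq₂⟩ := huniq₂
  rw [hA₁] at huq₁
  rw [hA₂] at huq₂
  obtain ⟨Δ₁, hΔ₁, r₁, hr₁, ⟨k₁, hk₁⟩, hgap₁, hpert₁, hloc₁⟩ := gap_exists xs xstar a₁ huq₁
  obtain ⟨Δ₂, hΔ₂, r₂, hr₂, ⟨k₂, hk₂⟩, hgap₂, hpert₂, hloc₂⟩ := gap_exists ys xstar a₂ huq₂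
  set rm := min r₁ r₂ with hrm
  have hrmpos : 0 < rm := lt_min hr₁ hr₂
  -- the local quadratic model of the potential and the first-order condition
  have hΦloc : (fun z => lam * ‖z - a₁‖ ^ 2 + (1 - lam) * ‖z - a₂‖ ^ 2) =ᶠ[𝓝 xstar]
      (distPotential A₁ A₂ lam) := by
    filter_upwards [Metric.closedBall_mem_nhds xstar hrmpos] with z hz
    rw [Metric.mem_closedBall, dist_eq_norm] at hz
    rw [distPotential, hA₁, hA₂, hloc₁ z (hz.trans (min_le_left _ _)),
      hloc₂ z (hz.trans (min_le_right _ _))]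
  have hgradΦ : HasGradientAt (distPotential A₁ A₂ lam)
      (lam • ((2:ℝ) • (xstar - a₁)) + (1 - lam) • ((2:ℝ) • (xstar - a₂))) xstar := by
    refine HasGradientAt.congr_of_eventuallyEq ?_ hΦloc.symm
    exact gradH_add (gradH_const_mul (gradH_normsq_sub a₁ xstar) lam)
      (gradH_const_mul (gradH_normsq_sub a₂ xstar) (1 - lam))
  have hvec0 : lam • ((2:ℝ) • (xstar - a₁)) + (1 - lam) • ((2:ℝ) • (xstar - a₂)) = 0 := by
    have h0 := hmin.hasFDerivAt_eq_zero hgradΦ.hasFDerivAt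
    have h1 := congrArg (InnerProductSpace.toDual ℝ (EuclideanSpace ℝ (Fin d))).symm h0
    simpa using h1
  have hstar : xstar = lam • a₁ + (1 - lam) • a₂ := by
    have h : xstar - (lam • a₁ + (1 - lam) • a₂) =
        (2:ℝ)⁻¹ • (lam • ((2:ℝ) • (xstar - a₁)) + (1 - lam) • ((2:ℝ) • (xstar - a₂))) := by
      module
    rw [hvec0, smul_zero, sub_eq_zero] at h
    exact h
  -- the flow ODE in terms of softmax means
  set bb : ℝ → EuclideanSpace ℝ (Fin d) := fun τ =>
    lam • smean w₁ xs (T * Real.exp (-τ)) (Y τ) +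
      (1 - lam) • smean w₂ ys (T * Real.exp (-τ)) (Y τ) with hbb
  have hYd : ∀ τ : ℝ, 0 ≤ τ → HasDerivAt Y (-(2:ℝ)⁻¹ • (Y τ - bb τ)) τ := by
    intro τ hτ
    have htpos : 0 < T * Real.exp (-τ) := by positivity
    have hg := (mixedPotential_grad hn₁ hn₂ hw₁pos hw₂pos hμ₁ hμ₂ lam htpos (Y τ)).gradient
    have h := hY τ hτ
    rw [hg] at h
    convert h using 1
    rw [hbb]
    module
  set Z : ℝ → EuclideanSpace ℝ (Fin d) := fun τ => Real.exp (τ/2) • (Y τ - xstar) with hZ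
  have hZd : ∀ τ : ℝ, 0 ≤ τ →
      HasDerivAt Z ((2⁻¹ * Real.exp (τ/2)) • (bb τ - xstar)) τ := by
    intro τ hτ
    have he : HasDerivAt (fun τ : ℝ => Real.exp (τ/2)) (Real.exp (τ/2) * (2⁻¹ : ℝ)) τ := by
      simpa [one_div] using ((hasDerivAt_id τ).div_const 2).exp
    have h := he.smul ((hYd τ hτ).sub_const xstar)
    rw [hZ]
    refine h.congr_deriv ?_
    module
  -- choose τ₀ beyond which the flow stays near xstar
  have hball := hconv (Metric.closedBall_mem_nhds xstar hrmpos)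
  obtain ⟨τ₁', hτ₁'⟩ := Filter.eventually_atTop.mp hball
  set τ₀ := max τ₁' 0 with hτ₀
  have hτ₀0 : (0:ℝ) ≤ τ₀ := le_max_right _ _
  have hnear : ∀ τ, τ₀ ≤ τ → ‖Y τ - xstar‖ ≤ rm := by
    intro τ hτ
    have := hτ₁' τ (le_trans (le_max_left _ _) hτ)
    rwa [Metric.mem_closedBall, dist_eq_norm] at this
  -- constants
  set K₁ := (∑ k, w₁ k * ‖xs k - a₁‖) / w₁ k₁ with hKd₁
  set K₂ := (∑ k, w₂ k * ‖ys k - a₂‖) / w₂ k₂ with hKd₂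
  have hK₁0 : 0 ≤ K₁ := div_nonneg
    (Finset.sum_nonneg fun k _ => mul_nonneg (hw₁pos k).le (norm_nonneg _)) (hw₁pos k₁).le
  have hK₂0 : 0 ≤ K₂ := div_nonneg
    (Finset.sum_nonneg fun k _ => mul_nonneg (hw₂pos k).le (norm_nonneg _)) (hw₂pos k₂).le
  set c₁ := Δ₁ / (8 * T) with hcd₁
  set c₂ := Δ₂ / (8 * T) with hcd₂
  have hc₁0 : 0 < c₁ := by rw [hcd₁]; positivity
  have hc₂0 : 0 < c₂ := by rw [hcd₂]; positivity
  set M₁ := Real.exp (-1 - Real.log c₁) with hMd₁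
  set M₂ := Real.exp (-1 - Real.log c₂) with hMd₂
  set CB := 2⁻¹ * (|lam| * (K₁ * M₁) + |1 - lam| * (K₂ * M₂)) with hCBd
  have hM₁0 : 0 < M₁ := Real.exp_pos _
  have hM₂0 : 0 < M₂ := Real.exp_pos _
  have hCB0 : 0 ≤ CB := by
    rw [hCBd]
    have := abs_nonneg lam
    have := abs_nonneg (1 - lam)
    positivity
  -- derivative bound beyond τ₀
  have hZbound : ∀ τ, τ₀ ≤ τ →
      ‖(2⁻¹ * Real.exp (τ/2)) • (bb τ - xstar)‖ ≤ CB * Real.exp (-τ/2) := by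
    intro τ hτ
    have htpos : 0 < T * Real.exp (-τ) := by positivity
    have hx : ‖Y τ - xstar‖ ≤ rm := hnear τ hτ
    have hp₁ : ∀ k, |‖Y τ - xs k‖ ^ 2 - ‖xstar - xs k‖ ^ 2| ≤ Δ₁ / 4 :=
      fun k => hpert₁ k (Y τ) (hx.trans (min_le_left _ _))
    have hp₂ : ∀ k, |‖Y τ - ys k‖ ^ 2 - ‖xstar - ys k‖ ^ 2| ≤ Δ₂ / 4 :=
      fun k => hpert₂ k (Y τ) (hx.trans (min_le_right _ _))
    have hm₁ := smean_err hw₁pos xs htpos (Y τ) xstar a₁ k₁ hk₁ hgap₁ hp₁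
    have hm₂ := smean_err hw₂pos ys htpos (Y τ) xstar a₂ k₂ hk₂ hgap₂ hp₂
    have he₁ : Real.exp (-(Δ₁ / 2) / (4 * (T * Real.exp (-τ)))) =
        Real.exp (-(c₁ * Real.exp τ)) := by
      congr 1
      rw [hcd₁, Real.exp_neg]
      field_simp
      ring
    have he₂ : Real.exp (-(Δ₂ / 2) / (4 * (T * Real.exp (-τ)))) =
        Real.exp (-(c₂ * Real.exp τ)) := by
      congr 1
      rw [hcd₂, Real.exp_neg]
      field_simp
      ring
    rw [he₁, ← hKd₁] at hm₁
    rw [he₂, ← hKd₂] at hm₂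
    have hd : bb τ - xstar = lam • (smean w₁ xs (T * Real.exp (-τ)) (Y τ) - a₁) +
        (1 - lam) • (smean w₂ ys (T * Real.exp (-τ)) (Y τ) - a₂) := by
      rw [hbb, hstar]
      module
    calc ‖(2⁻¹ * Real.exp (τ/2)) • (bb τ - xstar)‖
        = 2⁻¹ * Real.exp (τ/2) * ‖bb τ - xstar‖ := by
          rw [norm_smul, Real.norm_eq_abs, abs_of_pos (by positivity)]
      _ ≤ 2⁻¹ * Real.exp (τ/2) *
          (|lam| * (K₁ * Real.exp (-(c₁ * Real.exp τ))) +
           |1 - lam| * (K₂ * Real.exp (-(c₂ * Real.exp τ)))) := by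
          apply mul_le_mul_of_nonneg_left _ (by positivity)
          rw [hd]
          refine (norm_add_le _ _).trans ?_
          rw [norm_smul, norm_smul, Real.norm_eq_abs, Real.norm_eq_abs]
          exact add_le_add (mul_le_mul_of_nonneg_left hm₁ (abs_nonneg _))
            (mul_le_mul_of_nonneg_left hm₂ (abs_nonneg _))
      _ ≤ CB * Real.exp (-τ/2) := by
          have hb₁ := mul_le_mul_of_nonneg_left (exp_decay_bound hc₁0 τ)
            (mul_nonneg (abs_nonneg lam) hK₁0)
          have hb₂ := mul_le_mul_of_nonneg_left (exp_decay_bound hc₂0 τ)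
            (mul_nonneg (abs_nonneg (1 - lam)) hK₂0)
          rw [hCBd]
          rw [← hMd₁] at hb₁
          rw [← hMd₂] at hb₂
          nlinarith [hb₁, hb₂]
  -- fencing argument
  have hfence : ∀ τ, τ₀ ≤ τ → ‖Z τ‖ ≤ ‖Z τ₀‖ + 2 * CB := by
    intro τ₂ hτ₂
    have hBderiv : ∀ x : ℝ,
        HasDerivAt (fun τ => 2 * CB * (Real.exp (-τ₀/2) - Real.exp (-τ/2)))
          (CB * Real.exp (-x/2)) x := by
      intro x
      have h1 : HasDerivAt (fun τ : ℝ => -τ/2) (-(1:ℝ)/2) x := by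
        simpa using ((hasDerivAt_id x).neg.div_const 2)
      have h2 := h1.exp
      have h3 := (h2.const_sub (Real.exp (-τ₀/2))).const_mul (2 * CB)
      refine h3.congr_deriv ?_
      ring
    have key := image_norm_le_of_norm_deriv_right_le_deriv_boundary
      (f := fun τ => Z τ - Z τ₀) (f' := fun τ => (2⁻¹ * Real.exp (τ/2)) • (bb τ - xstar))
      (a := τ₀) (b := τ₂)
      (fun τ hτ => (((hZd τ (le_trans hτ₀0 hτ.1)).sub_const (Z τ₀)).continuousAt).continuousWithinAt)
      (fun τ hτ => ((hZd τ (le_trans hτ₀0 hτ.1)).sub_const (Z τ₀)).hasDerivWithinAt)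
      (by simp)
      hBderiv
      (fun τ hτ => hZbound τ hτ.1)
    have hend := key (Set.right_mem_Icc.mpr hτ₂)
    have h5 : 2 * CB * (Real.exp (-τ₀/2) - Real.exp (-τ₂/2)) ≤ 2 * CB := by
      have h6 : Real.exp (-τ₀/2) ≤ 1 := Real.exp_le_one_iff.mpr (by linarith)
      nlinarith [Real.exp_pos (-τ₂/2), Real.exp_pos (-τ₀/2)]
    calc ‖Z τ₂‖ ≤ ‖Z τ₀‖ + ‖Z τ₂ - Z τ₀‖ := by
          have := norm_add_le (Z τ₀) (Z τ₂ - Z τ₀)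
          simpa using this
      _ ≤ ‖Z τ₀‖ + 2 * CB := by
          have := le_trans hend h5
          linarith
  -- supremum over the compact initial interval
  have hZcont : ContinuousOn (fun τ => ‖Z τ‖) (Set.Icc 0 τ₀) := by
    intro τ hτ
    exact ((hZd τ hτ.1).continuousAt.norm).continuousWithinAt
  obtain ⟨τm, hτm, hmax'⟩ :=
    isCompact_Icc.exists_isMaxOn ⟨0, Set.left_mem_Icc.mpr hτ₀0⟩ hZcont
  have hmax : ∀ τ ∈ Set.Icc (0:ℝ) τ₀, ‖Z τ‖ ≤ ‖Z τm‖ := fun τ hτ => hmax' hτ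
  refine ⟨max (‖Z τm‖) (‖Z τ₀‖ + 2 * CB) + 1, ?_, ?_⟩
  · have h0 : (0:ℝ) ≤ max (‖Z τm‖) (‖Z τ₀‖ + 2 * CB) :=
      le_trans (norm_nonneg _) (le_max_left _ _)
    linarith
  · intro τ hτ
    have hexp1 : Real.exp (-τ/2) * Real.exp (τ/2) = 1 := by
      rw [← Real.exp_add, show -τ/2 + τ/2 = 0 from by ring, Real.exp_zero]
    have hZn : ‖Z τ‖ = Real.exp (τ/2) * ‖Y τ - xstar‖ := by
      rw [hZ, norm_smul, Real.norm_eq_abs, abs_of_pos (Real.exp_pos _)]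
    have hle : ‖Z τ‖ ≤ max (‖Z τm‖) (‖Z τ₀‖ + 2 * CB) := by
      rcases le_total τ τ₀ with h | h
      · exact le_max_of_le_left (hmax τ ⟨hτ, h⟩)
      · exact le_max_of_le_right (hfence τ h)
    calc ‖Y τ - xstar‖ = Real.exp (-τ/2) * ‖Z τ‖ := by
          rw [hZn, ← mul_assoc, hexp1, one_mul]
      _ ≤ Real.exp (-τ/2) * (max (‖Z τm‖) (‖Z τ₀‖ + 2 * CB) + 1) := by
          apply mul_le_mul_of_nonneg_left _ (Real.exp_pos _).le
          linarith
      _ = (max (‖Z τm‖) (‖Z τ₀‖ + 2 * CB) + 1) * Real.exp (-τ/2) := mul_comm _ _
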